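/- Let γ : I → H3 be a unit-speed non-geodesic curve with constant geodesic curvature k and Frenet frame {T,N,B} with N₃B₃ ≠ 0 (where N₃ = g(N,e3), B₃ = g(B,e3)). Then γ is not biharmonic. -/

import Mathlib

noncomputable section

/-- Points of the Heisenberg group `H₃ = ℝ³`. -/
abbrev R3 := ℝ × ℝ × ℝ

/-- The left-invariant frame field `e₁ = ∂x - (y/2)∂z`. -/
def e1 : R3 → R3 := fun p => (1, 0, -p.2.1 / 2)
/-- The left-invariant frame field `e₂ = ∂y + (x/2)∂z`. -/
def e2 : R3 → R3 := fun p => (0, 1, p.1 / 2)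
/-- The left-invariant frame field `e₃ = ∂z`. -/
def e3 : R3 → R3 := fun _ => (0, 0, 1)

/-- The Heisenberg metric `g = dx² + dy² + (dz + (y/2)dx - (x/2)dy)²`. -/
def gm (p v w : R3) : ℝ :=
  v.1 * w.1 + v.2.1 * w.2.1 +
    (v.2.2 + p.2.1 / 2 * v.1 - p.1 / 2 * v.2.1) *
      (w.2.2 + p.2.1 / 2 * w.1 - p.1 / 2 * w.2.1)

/-- Lie bracket of vector fields on `ℝ³` (in coordinate components). -/
def bracket (X Y : R3 → R3) : R3 → R3 :=
  fun p => fderiv ℝ Y p (X p) - fderiv ℝ X p (Y p)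

/-- Directional derivative of a scalar function along a vector field. -/
def dd (X : R3 → R3) (f : R3 → ℝ) : R3 → ℝ := fun p => fderiv ℝ f p (X p)

/-- The Koszul expression `g(∇_X Y, Z)` characterizing the Levi-Civita connection. -/
def koszul (X Y Z : R3 → R3) : R3 → ℝ := fun p =>
  (dd X (fun q => gm q (Y q) (Z q)) p + dd Y (fun q => gm q (X q) (Z q)) p
    - dd Z (fun q => gm q (X q) (Y q)) p
    + gm p (bracket X Y p) (Z p) - gm p (bracket X Z p) (Y p)
    - gm p (bracket Y Z p) (X p)) / 2

/-- The Levi-Civita connection of the Heisenberg metric, recovered from the Koszul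
formula via the orthonormal frame `e₁, e₂, e₃`. -/
def nabla (X Y : R3 → R3) : R3 → R3 := fun p =>
  koszul X Y e1 p • e1 p + koszul X Y e2 p • e2 p + koszul X Y e3 p • e3 p

/-- Curvature operator `R(X,Y)Z = -∇_X∇_Y Z + ∇_Y∇_X Z + ∇_{[X,Y]}Z`. -/
def Rc (X Y Z : R3 → R3) : R3 → R3 := fun p =>
  -nabla X (nabla Y Z) p + nabla Y (nabla X Z) p + nabla (bracket X Y) Z p

/-- Riemann-Christoffel tensor `R(X,Y,Z,W) = g(R(X,Y)Z, W)`. -/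
def R4 (X Y Z W : R3 → R3) : R3 → ℝ := fun p => gm p (Rc X Y Z p) (W p)

/-- Ricci tensor `ρ(X,Y) = trace (Z ↦ R(X,Z)Y)`, computed in the orthonormal frame. -/
def ricci (X Y : R3 → R3) : R3 → ℝ := fun p =>
  gm p (Rc X e1 Y p) (e1 p) + gm p (Rc X e2 Y p) (e2 p) + gm p (Rc X e3 Y p) (e3 p)

/-- Components of a (coordinate) tangent vector `v` at `p` with respect to the
orthonormal frame `e₁, e₂, e₃`. -/
def fc (p v : R3) : R3 := (v.1, v.2.1, v.2.2 + p.2.1 / 2 * v.1 - p.1 / 2 * v.2.1)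

/-- Frame components of the velocity field of a curve `γ`. -/
def tv (γ : ℝ → R3) (s : ℝ) : R3 := fc (γ s) (deriv γ s)

/-- Inner product of frame components (the frame is `g`-orthonormal). -/
def dot (v w : R3) : ℝ := v.1 * w.1 + v.2.1 * w.2.1 + v.2.2 * w.2.2

/-- Cross product of frame components (the frame is orthonormal and positively oriented). -/
def cross (v w : R3) : R3 :=
  (v.2.1 * w.2.2 - v.2.2 * w.2.1, v.2.2 * w.1 - v.1 * w.2.2, v.1 * w.2.1 - v.2.1 * w.1)

/-- Covariant derivative `∇_{γ'} V` along a curve `γ` of a vector field `V` given by its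
frame components, expressed again in frame components, using the connection coefficients
of the Levi-Civita connection of the Heisenberg metric in the frame `e₁, e₂, e₃`. -/
def covD (γ : ℝ → R3) (V : ℝ → R3) : ℝ → R3 := fun s =>
  let t := tv γ s
  (deriv (fun u => (V u).1) s + (V s).2.1 * t.2.2 / 2 + (V s).2.2 * t.2.1 / 2,
   deriv (fun u => (V u).2.1) s - (V s).1 * t.2.2 / 2 - (V s).2.2 * t.1 / 2,
   deriv (fun u => (V u).2.2) s - (V s).1 * t.2.1 / 2 + (V s).2.1 * t.1 / 2)

/-- The left-invariant vector field with constant frame components `v`. -/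
def ext (v : R3) : R3 → R3 := fun p => v.1 • e1 p + v.2.1 • e2 p + v.2.2 • e3 p

/-- Pointwise curvature operator on frame components: `R` is tensorial, so its value on
vectors at `p` (given in frame components) is computed via left-invariant extensions. -/
def Rfr (p : R3) (x y z : R3) : R3 := fc p (Rc (ext x) (ext y) (ext z) p)

/-- Bitension field `τ₂(γ) = ∇_T³ T + R(T, ∇_T T) T` of a unit-speed curve, where `T`
is the unit tangent in frame components. -/
def bitension (γ T : ℝ → R3) (s : ℝ) : R3 :=
  covD γ (covD γ (covD γ T)) s + Rfr (γ s) (T s) (covD γ T s) (T s)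

/-- A curve is biharmonic iff its bitension field vanishes. -/
def Biharmonic (γ T : ℝ → R3) : Prop := ∀ s, bitension γ T s = 0

/-- Frenet data of a unit-speed curve in `H₃`: `T, N, B` are the frame components of the
Frenet frame, `k > 0` is the geodesic curvature and `τ` the geodesic torsion, satisfying
the Frenet equations `∇_T T = kN`, `∇_T N = -kT - τB`, `∇_T B = τN`, with `B = T × N`. -/
structure Frenet (γ T N B : ℝ → R3) (k τ : ℝ → ℝ) : Prop where
  smooth_γ : ContDiff ℝ (⊤ : ℕ∞) γ
  smooth_T : ContDiff ℝ (⊤ : ℕ∞) T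
  smooth_N : ContDiff ℝ (⊤ : ℕ∞) N
  smooth_B : ContDiff ℝ (⊤ : ℕ∞) B
  smooth_k : ContDiff ℝ (⊤ : ℕ∞) k
  smooth_τ : ContDiff ℝ (⊤ : ℕ∞) τ
  tangent : ∀ s, T s = tv γ s
  unit : ∀ s, dot (T s) (T s) = 1
  normal_unit : ∀ s, dot (N s) (N s) = 1
  fr1 : ∀ s, covD γ T s = k s • N s
  fr2 : ∀ s, covD γ N s = -(k s • T s) - τ s • B s
  fr3 : ∀ s, covD γ B s = τ s • N s
  binormal : ∀ s, B s = cross (T s) (N s)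


namespace HeisAux

/-- Frame components of `∇_x y` for left-invariant fields. -/
def nab (x y : R3) : R3 :=
  ((x.2.1 * y.2.2 + x.2.2 * y.2.1) / 2, -(x.1 * y.2.2 + x.2.2 * y.1) / 2,
    (x.1 * y.2.1 - x.2.1 * y.1) / 2)

def br (x y : R3) : R3 := (0, 0, x.1 * y.2.1 - x.2.1 * y.1)

def RR (x y z : R3) : R3 := -nab x (nab y z) + nab y (nab x z) + nab (br x y) z

lemma ext_apply (v p : R3) :
    ext v p = (v.1, v.2.1, v.2.2 + v.2.1 / 2 * p.1 - v.1 / 2 * p.2.1) := by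
  simp only [ext, e1, e2, e3, Prod.smul_mk, smul_eq_mul, Prod.mk_add_mk]
  refine Prod.ext ?_ (Prod.ext ?_ ?_) <;> simp <;> ring

lemma fderiv_ext_apply (v p u : R3) :
    fderiv ℝ (ext v) p u = (0, 0, v.2.1 / 2 * u.1 - v.1 / 2 * u.2.1) := by
  have h1 : HasFDerivAt (fun q : R3 => q.1) (ContinuousLinearMap.fst ℝ ℝ (ℝ × ℝ)) p :=
    hasFDerivAt_fst
  have h2 : HasFDerivAt (fun q : R3 => q.2.1)
      ((ContinuousLinearMap.fst ℝ ℝ ℝ).comp (ContinuousLinearMap.snd ℝ ℝ (ℝ × ℝ))) p :=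
    hasFDerivAt_snd.fst
  have h3 := ((hasFDerivAt_const v.2.2 p).fun_add (h1.const_mul (v.2.1 / 2))).fun_sub
    (h2.const_mul (v.1 / 2))
  have h4 := HasFDerivAt.prodMk (hasFDerivAt_const v.1 p) (HasFDerivAt.prodMk (hasFDerivAt_const v.2.1 p) h3)
  have he : ext v = (fun q : R3 =>
      (v.1, (v.2.1, v.2.2 + v.2.1 / 2 * q.1 - v.1 / 2 * q.2.1))) := by
    funext q; rw [ext_apply]
  rw [he, h4.fderiv]
  simp

end HeisAux

namespace HeisAux

lemma bracket_ext (x y : R3) :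
    bracket (ext x) (ext y) = ext (0, 0, x.1 * y.2.1 - x.2.1 * y.1) := by
  funext p
  simp only [bracket, fderiv_ext_apply, ext_apply]
  refine Prod.ext ?_ (Prod.ext ?_ ?_) <;> simp <;> ring

lemma gm_ext (p v w : R3) : gm p (ext v p) (ext w p) = dot v w := by
  simp only [gm, ext_apply, dot]; ring

lemma he1 : e1 = ext (1, 0, 0) := by
  funext p; rw [ext_apply]; simp [e1]; ring
lemma he2 : e2 = ext (0, 1, 0) := by
  funext p; rw [ext_apply]; simp [e2]; ring
lemma he3 : e3 = ext (0, 0, 1) := by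
  funext p; rw [ext_apply]; simp [e3]

lemma koszul_ext (x y z : R3) (p : R3) :
    koszul (ext x) (ext y) (ext z) p =
      (dot (br x y) z - dot (br x z) y - dot (br y z) x) / 2 := by
  have hc : ∀ a b : R3, (fun q => gm q (ext a q) (ext b q)) = fun _ => dot a b :=
    fun a b => funext fun q => gm_ext q a b
  simp only [koszul, dd, hc, fderiv_fun_const, Pi.zero_apply, ContinuousLinearMap.zero_apply,
    bracket_ext, gm_ext, br]
  ring

lemma nabla_ext (x y : R3) : nabla (ext x) (ext y) = ext (nab x y) := by
  funext p
  have h1 : nabla (ext x) (ext y) p =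
      koszul (ext x) (ext y) (ext (1,0,0)) p • e1 p +
      koszul (ext x) (ext y) (ext (0,1,0)) p • e2 p +
      koszul (ext x) (ext y) (ext (0,0,1)) p • e3 p := by
    rw [nabla, ← he1, ← he2, ← he3]
  rw [h1, koszul_ext, koszul_ext, koszul_ext, ext_apply, e1, e2, e3]
  simp only [br, dot, nab, Prod.smul_mk, smul_eq_mul, Prod.mk_add_mk]
  refine Prod.ext ?_ (Prod.ext ?_ ?_) <;> simp <;> ring

lemma Rc_ext (x y z : R3) (p : R3) : Rc (ext x) (ext y) (ext z) p = ext (RR x y z) p := by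
  simp only [Rc, nabla_ext, bracket_ext, RR]
  refine Prod.ext ?_ (Prod.ext ?_ ?_) <;>
    simp [ext_apply, nab, br, Prod.fst_add, Prod.snd_add, Prod.fst_neg, Prod.snd_neg] <;> ring

lemma fc_ext (p w : R3) : fc p (ext w p) = w := by
  rw [ext_apply]; simp [fc]; ring

lemma Rfr_eq (p x y z : R3) : Rfr p x y z = RR x y z := by
  rw [Rfr, Rc_ext, fc_ext]

end HeisAux

namespace HeisAux

lemma covD_comb (γ : ℝ → R3) (f g : ℝ → ℝ) (V W : ℝ → R3)
    (hf : Differentiable ℝ f) (hg : Differentiable ℝ g)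
    (hV : Differentiable ℝ V) (hW : Differentiable ℝ W) (s : ℝ) :
    covD γ (fun u => f u • V u + g u • W u) s =
      deriv f s • V s + f s • covD γ V s + deriv g s • W s + g s • covD γ W s := by
  have e1 : (fun u => ((fun u => f u • V u + g u • W u) u).1)
      = fun u => f u * (V u).1 + g u * (W u).1 := by
    funext u; simp
  have e2 : (fun u => ((fun u => f u • V u + g u • W u) u).2.1)
      = fun u => f u * (V u).2.1 + g u * (W u).2.1 := by
    funext u; simp
  have e3 : (fun u => ((fun u => f u • V u + g u • W u) u).2.2)
      = fun u => f u * (V u).2.2 + g u * (W u).2.2 := by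
    funext u; simp
  have d1 : deriv (fun u => f u * (V u).1 + g u * (W u).1) s
      = (deriv f s * (V s).1 + f s * deriv (fun u => (V u).1) s)
        + (deriv g s * (W s).1 + g s * deriv (fun u => (W u).1) s) := by
    rw [deriv_fun_add ((hf.fun_mul hV.fst).differentiableAt) ((hg.fun_mul hW.fst).differentiableAt),
      deriv_fun_mul hf.differentiableAt hV.fst.differentiableAt,
      deriv_fun_mul hg.differentiableAt hW.fst.differentiableAt]
  have d2 : deriv (fun u => f u * (V u).2.1 + g u * (W u).2.1) s
      = (deriv f s * (V s).2.1 + f s * deriv (fun u => (V u).2.1) s)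
        + (deriv g s * (W s).2.1 + g s * deriv (fun u => (W u).2.1) s) := by
    rw [deriv_fun_add ((hf.fun_mul hV.snd.fst).differentiableAt) ((hg.fun_mul hW.snd.fst).differentiableAt),
      deriv_fun_mul hf.differentiableAt hV.snd.fst.differentiableAt,
      deriv_fun_mul hg.differentiableAt hW.snd.fst.differentiableAt]
  have d3 : deriv (fun u => f u * (V u).2.2 + g u * (W u).2.2) s
      = (deriv f s * (V s).2.2 + f s * deriv (fun u => (V u).2.2) s)
        + (deriv g s * (W s).2.2 + g s * deriv (fun u => (W u).2.2) s) := by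
    rw [deriv_fun_add ((hf.fun_mul hV.snd.snd).differentiableAt) ((hg.fun_mul hW.snd.snd).differentiableAt),
      deriv_fun_mul hf.differentiableAt hV.snd.snd.differentiableAt,
      deriv_fun_mul hg.differentiableAt hW.snd.snd.differentiableAt]
  simp only [covD]
  refine Prod.ext ?_ (Prod.ext ?_ ?_) <;>
    simp only [e1, e2, e3, d1, d2, d3, Prod.fst_add, Prod.snd_add, Prod.smul_fst,
      Prod.smul_snd, smul_eq_mul] <;> ring

lemma covD_smul (γ : ℝ → R3) (f : ℝ → ℝ) (V : ℝ → R3)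
    (hf : Differentiable ℝ f) (hV : Differentiable ℝ V) (s : ℝ) :
    covD γ (fun u => f u • V u) s = deriv f s • V s + f s • covD γ V s := by
  have h := covD_comb γ f (fun _ => (0:ℝ)) V V hf (differentiable_const (0:ℝ)) hV hV s
  have e : (fun u => f u • V u + (fun _ => (0:ℝ)) u • V u) = fun u => f u • V u := by
    funext u; simp
  rw [e] at h
  simpa using h

lemma deriv_dot (γ : ℝ → R3) (V W : ℝ → R3)
    (hV : Differentiable ℝ V) (hW : Differentiable ℝ W) (s : ℝ) :
    deriv (fun u => dot (V u) (W u)) s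
      = dot (covD γ V s) (W s) + dot (V s) (covD γ W s) := by
  have e : (fun u => dot (V u) (W u)) = fun u =>
      (V u).1 * (W u).1 + (V u).2.1 * (W u).2.1 + (V u).2.2 * (W u).2.2 := rfl
  rw [e, deriv_fun_add (((hV.fst.fun_mul hW.fst).fun_add (hV.snd.fst.fun_mul hW.snd.fst)).differentiableAt)
      ((hV.snd.snd.fun_mul hW.snd.snd).differentiableAt),
    deriv_fun_add ((hV.fst.fun_mul hW.fst).differentiableAt) ((hV.snd.fst.fun_mul hW.snd.fst).differentiableAt),
    deriv_fun_mul hV.fst.differentiableAt hW.fst.differentiableAt,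
    deriv_fun_mul hV.snd.fst.differentiableAt hW.snd.fst.differentiableAt,
    deriv_fun_mul hV.snd.snd.differentiableAt hW.snd.snd.differentiableAt]
  simp only [covD, dot]
  ring

lemma dot_add_left (v w u : R3) : dot (v + w) u = dot v u + dot w u := by
  simp [dot, Prod.fst_add, Prod.snd_add]; ring

lemma dot_smul_left (r : ℝ) (v u : R3) : dot (r • v) u = r * dot v u := by
  simp [dot, Prod.smul_fst, Prod.smul_snd, smul_eq_mul]; ring

lemma RR_smul₂ (c : ℝ) (x y z : R3) : RR x (c • y) z = c • RR x y z := by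
  refine Prod.ext ?_ (Prod.ext ?_ ?_) <;>
    simp [RR, nab, br, Prod.fst_add, Prod.snd_add, Prod.fst_neg, Prod.snd_neg,
      Prod.smul_fst, Prod.smul_snd, smul_eq_mul] <;> ring

end HeisAux

namespace HeisAux

lemma dot_comm (v w : R3) : dot v w = dot w v := by simp [dot]; ring

lemma dot_zero_left (v : R3) : dot 0 v = 0 := by simp [dot]

lemma dot_sub_left (v w u : R3) : dot (v - w) u = dot v u - dot w u := by
  simp [dot]; ring

lemma dot_neg_left (v u : R3) : dot (-v) u = -dot v u := by
  simp [dot]; ring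

end HeisAux

open HeisAux

/-- If `γ` is a non-geodesic unit-speed curve in `H₃` with constant geodesic curvature
and `N₃B₃ ≠ 0`, then `γ` is not biharmonic. -/
theorem not_biharmonic_of_N3B3_ne_zero (γ T N B : ℝ → R3) (k τ : ℝ → ℝ)
    (hF : Frenet γ T N B k τ) (hk : ∀ s, 0 < k s)
    (hconst : ∀ s t, k s = k t)
    (hNB : ∀ s, (N s).2.2 * (B s).2.2 ≠ 0) :
    ¬ Biharmonic γ T := by
  intro hB
  simp only [Biharmonic] at hB
  have dT : Differentiable ℝ T := hF.smooth_T.differentiable (by simp)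
  have dN : Differentiable ℝ N := hF.smooth_N.differentiable (by simp)
  have dB : Differentiable ℝ B := hF.smooth_B.differentiable (by simp)
  have dτ : Differentiable ℝ τ := hF.smooth_τ.differentiable (by simp)
  have hc : ∀ s, k s = k 0 := fun s => hconst s 0
  have hc0 : k 0 ≠ 0 := ne_of_gt (hk 0)
  -- first derivative
  have hT1 : covD γ T = fun u => k 0 • N u := funext fun u => by rw [hF.fr1 u, hc u]
  -- second derivative
  have h2 : covD γ (covD γ T) = fun s => (-(k 0 * k 0)) • T s + (-(k 0 * τ s)) • B s := by
    funext s
    rw [hT1, covD_smul γ (fun _ => k 0) N (differentiable_const _) dN s, hF.fr2 s, hc s,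
      deriv_const]
    refine Prod.ext ?_ (Prod.ext ?_ ?_) <;>
      simp [Prod.fst_add, Prod.snd_add, Prod.smul_fst, Prod.smul_snd, smul_eq_mul,
        Prod.fst_sub, Prod.snd_sub, Prod.fst_neg, Prod.snd_neg] <;> ring
  -- third derivative
  have h3 : ∀ s, covD γ (covD γ (covD γ T)) s =
      (-(k 0 * k 0 * k 0)) • N s + (-(k 0 * deriv τ s)) • B s
        + (-(k 0 * (τ s * τ s))) • N s := by
    intro s
    rw [h2, covD_comb γ (fun _ => -(k 0 * k 0)) (fun u => -(k 0 * τ u)) T B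
      (differentiable_const _) ((dτ.const_mul (k 0)).neg) dT dB s, hF.fr1 s, hF.fr3 s, hc s,
      deriv_const]
    have hdg : deriv (fun u => -(k 0 * τ u)) s = -(k 0 * deriv τ s) := by
      rw [deriv.fun_neg, deriv_const_mul _ dτ.differentiableAt]
    rw [hdg]
    refine Prod.ext ?_ (Prod.ext ?_ ?_) <;>
      simp [Prod.fst_add, Prod.snd_add, Prod.smul_fst, Prod.smul_snd, smul_eq_mul] <;> ring
  -- bitension equation
  have hbit : ∀ s, ((-(k 0 * k 0 * k 0)) • N s + (-(k 0 * deriv τ s)) • B s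
      + (-(k 0 * (τ s * τ s))) • N s) + k 0 • RR (T s) (N s) (T s) = 0 := by
    intro s
    have hb := hB s
    simp only [bitension] at hb
    rw [h3 s, hF.fr1 s, hc s, Rfr_eq, RR_smul₂] at hb
    exact hb
  -- orthogonality facts
  have hTB : ∀ s, dot (T s) (B s) = 0 := by
    intro s; rw [hF.binormal s]; simp [dot, cross]; ring
  have hNB0 : ∀ s, dot (N s) (B s) = 0 := by
    intro s; rw [hF.binormal s]; simp [dot, cross]; ring
  have hBB : ∀ s, dot (B s) (B s) = 1 - dot (T s) (N s) ^ 2 := by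
    intro s
    have h1 := hF.unit s; have h2 := hF.normal_unit s
    simp only [dot] at h1 h2 ⊢
    rw [hF.binormal s]
    simp only [cross]
    linear_combination ((N s).1 * (N s).1 + (N s).2.1 * (N s).2.1
      + (N s).2.2 * (N s).2.2) * h1 + h2
  -- constancy of dot T N
  have daF : Differentiable ℝ (fun u => dot (T u) (N u)) := by
    simp only [dot]
    exact ((dT.fst.mul dN.fst).add (dT.snd.fst.mul dN.snd.fst)).add
      (dT.snd.snd.mul dN.snd.snd)
  have hda : ∀ s, deriv (fun u => dot (T u) (N u)) s = 0 := by
    intro s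
    rw [deriv_dot γ T N dT dN s, hF.fr1 s, hF.fr2 s, dot_smul_left,
      dot_comm (T s) _, dot_sub_left, dot_neg_left, dot_smul_left, dot_smul_left,
      dot_comm (B s) (T s), hF.normal_unit s, hF.unit s, hTB s]
    ring
  have ha : ∀ s, dot (T s) (N s) = dot (T 0) (N 0) :=
    fun s => is_const_of_deriv_eq_zero daF hda s 0
  -- τ * a₀² = 0
  have hτa : ∀ s, τ s * dot (T 0) (N 0) ^ 2 = 0 := by
    intro s
    have hz : (fun u => dot (N u) (B u)) = fun _ => (0 : ℝ) := funext hNB0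
    have h0 : deriv (fun u => dot (N u) (B u)) s = 0 := by rw [hz]; simp
    rw [deriv_dot γ N B dN dB s, hF.fr2 s, hF.fr3 s, dot_sub_left, dot_neg_left,
      dot_smul_left, dot_smul_left, dot_comm (N s) (τ s • N s), dot_smul_left,
      hTB s, hBB s, hF.normal_unit s, ha s] at h0
    linear_combination h0
  -- curvature scalar identities
  have hCB : ∀ s, dot (RR (T s) (N s) (T s)) (B s)
      = (N s).2.2 * (B s).2.2 - dot (T s) (N s) * ((T s).2.2 * (B s).2.2) := by
    intro s
    have h1 := hF.unit s
    simp only [dot] at h1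
    rw [hF.binormal s]
    simp only [dot, cross, RR, nab, br, Prod.fst_add, Prod.snd_add, Prod.fst_neg,
      Prod.snd_neg]
    linear_combination (((T s).1 * (N s).2.1 - (T s).2.1 * (N s).1) * (N s).2.2) * h1
  have hCN : ∀ s, dot (RR (T s) (N s) (T s)) (N s)
      = -(3/4) * ((B s).2.2 * (B s).2.2)
        + (1/4) * ((T s).2.2 * (T s).2.2 + (N s).2.2 * (N s).2.2)
        - dot (T s) (N s) / 2 * ((N s).2.2 * (T s).2.2) := by
    intro s
    have h1 := hF.unit s; have h2 := hF.normal_unit s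
    simp only [dot] at h1 h2
    rw [hF.binormal s]
    simp only [dot, cross, RR, nab, br, Prod.fst_add, Prod.snd_add, Prod.fst_neg,
      Prod.snd_neg]
    linear_combination ((N s).2.2 * (N s).2.2 / 4) * h1 + ((T s).2.2 * (T s).2.2 / 4) * h2
  -- scalar bitension equations
  have hEqB : ∀ s, deriv τ s * (1 - dot (T 0) (N 0) ^ 2)
      = (N s).2.2 * (B s).2.2 - dot (T 0) (N 0) * ((T s).2.2 * (B s).2.2) := by
    intro s
    have h := congrArg (fun v : R3 => dot v (B s)) (hbit s)
    simp only [dot_add_left, dot_smul_left, dot_zero_left] at h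
    rw [hNB0 s, hBB s, hCB s, ha s] at h
    have h9 : k 0 * (deriv τ s * (1 - dot (T 0) (N 0) ^ 2)
        - ((N s).2.2 * (B s).2.2 - dot (T 0) (N 0) * ((T s).2.2 * (B s).2.2))) = 0 := by
      linear_combination -h
    rcases mul_eq_zero.mp h9 with h9 | h9
    · exact absurd h9 hc0
    · linarith
  have hEqN : ∀ s, k 0 * k 0 + τ s * τ s
      = -(3/4) * ((B s).2.2 * (B s).2.2)
        + (1/4) * ((T s).2.2 * (T s).2.2 + (N s).2.2 * (N s).2.2)
        - dot (T 0) (N 0) / 2 * ((N s).2.2 * (T s).2.2) := by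
    intro s
    have h := congrArg (fun v : R3 => dot v (N s)) (hbit s)
    simp only [dot_add_left, dot_smul_left, dot_zero_left] at h
    rw [dot_comm (B s) (N s), hNB0 s, hF.normal_unit s, hCN s, ha s] at h
    have h9 : k 0 * ((k 0 * k 0 + τ s * τ s)
        - (-(3/4) * ((B s).2.2 * (B s).2.2)
          + (1/4) * ((T s).2.2 * (T s).2.2 + (N s).2.2 * (N s).2.2)
          - dot (T 0) (N 0) / 2 * ((N s).2.2 * (T s).2.2))) = 0 := by
      linear_combination -h
    rcases mul_eq_zero.mp h9 with h9 | h9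
    · exact absurd h9 hc0
    · linarith
  -- component ODEs
  have hO1 : ∀ s, deriv (fun u => (T u).2.2) s = k 0 * (N s).2.2 := by
    intro s
    have h := congrArg (fun v : R3 => v.2.2) (hF.fr1 s)
    simp only [covD, Prod.smul_snd, Prod.smul_fst, smul_eq_mul] at h
    rw [← hF.tangent s, hc s] at h
    linear_combination h
  have hb3c : ∀ s, (B s).2.2 = (T s).1 * (N s).2.1 - (T s).2.1 * (N s).1 := by
    intro s; rw [hF.binormal s]; simp [cross]
  have hO2 : ∀ s, deriv (fun u => (N u).2.2) s
      = -(k 0 * (T s).2.2) - τ s * (B s).2.2 - (B s).2.2 / 2 := by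
    intro s
    have h := congrArg (fun v : R3 => v.2.2) (hF.fr2 s)
    simp only [covD, Prod.snd_sub, Prod.fst_sub, Prod.snd_neg, Prod.fst_neg,
      Prod.smul_snd, Prod.smul_fst, smul_eq_mul] at h
    rw [← hF.tangent s, hc s] at h
    linear_combination h + hb3c s / 2
  have hO3 : ∀ s, deriv (fun u => (B u).2.2) s
      = τ s * (N s).2.2 + ((N s).2.2 - dot (T 0) (N 0) * (T s).2.2) / 2 := by
    intro s
    have h := congrArg (fun v : R3 => v.2.2) (hF.fr3 s)
    simp only [covD, Prod.smul_snd, Prod.smul_fst, smul_eq_mul] at h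
    rw [← hF.tangent s] at h
    have hx : (B s).1 * (T s).2.1 - (B s).2.1 * (T s).1
        = (N s).2.2 - dot (T s) (N s) * (T s).2.2 := by
      have h1 := hF.unit s
      simp only [dot] at h1 ⊢
      rw [hF.binormal s]
      simp only [cross]
      linear_combination (N s).2.2 * h1
    rw [ha s] at hx
    linear_combination h + hx / 2
  by_cases ha0 : dot (T 0) (N 0) = 0
  · -- orthonormal case
    have hEqB' : ∀ s, deriv τ s = (N s).2.2 * (B s).2.2 := by
      intro s; have h := hEqB s; rw [ha0] at h; linear_combination h
    have hF0 : (fun u => k 0 * k 0 + τ u * τ u + (3/4) * ((B u).2.2 * (B u).2.2)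
        - (1/4) * ((T u).2.2 * (T u).2.2 + (N u).2.2 * (N u).2.2)) = fun _ => (0 : ℝ) := by
      funext u; have h := hEqN u; rw [ha0] at h; linear_combination h
    have hkey : ∀ s, (N s).2.2 * (B s).2.2 * (4 * τ s + 1) = 0 := by
      intro s
      have hτs : HasDerivAt τ (deriv τ s) s := dτ.differentiableAt.hasDerivAt
      have ht3 : HasDerivAt (fun u => (T u).2.2) (deriv (fun u => (T u).2.2) s) s :=
        (dT.snd.snd s).hasDerivAt
      have hn3 : HasDerivAt (fun u => (N u).2.2) (deriv (fun u => (N u).2.2) s) s :=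
        (dN.snd.snd s).hasDerivAt
      have hb3 : HasDerivAt (fun u => (B u).2.2) (deriv (fun u => (B u).2.2) s) s :=
        (dB.snd.snd s).hasDerivAt
      have hD : HasDerivAt (fun u => k 0 * k 0 + τ u * τ u
          + (3/4) * ((B u).2.2 * (B u).2.2)
          - (1/4) * ((T u).2.2 * (T u).2.2 + (N u).2.2 * (N u).2.2))
          (0 + (deriv τ s * τ s + τ s * deriv τ s)
            + (3/4) * (deriv (fun u => (B u).2.2) s * (B s).2.2
              + (B s).2.2 * deriv (fun u => (B u).2.2) s)
            - (1/4) * ((deriv (fun u => (T u).2.2) s * (T s).2.2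
              + (T s).2.2 * deriv (fun u => (T u).2.2) s)
              + (deriv (fun u => (N u).2.2) s * (N s).2.2
              + (N s).2.2 * deriv (fun u => (N u).2.2) s))) s :=
        (((hasDerivAt_const s (k 0 * k 0)).add (hτs.mul hτs)).add
          ((hb3.mul hb3).const_mul (3/4))).sub
          (((ht3.mul ht3).add (hn3.mul hn3)).const_mul (1/4))
      have e0 : deriv (fun u => k 0 * k 0 + τ u * τ u
          + (3/4) * ((B u).2.2 * (B u).2.2)
          - (1/4) * ((T u).2.2 * (T u).2.2 + (N u).2.2 * (N u).2.2)) s = 0 := by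
        rw [hF0]; exact deriv_const s 0
      rw [hD.deriv] at e0
      rw [hO1 s, hO2 s, hO3 s, hEqB' s, ha0] at e0
      linear_combination e0
    have hτ14 : ∀ s, τ s = -(1/4) := by
      intro s
      rcases mul_eq_zero.mp (hkey s) with h | h
      · exact absurd h (hNB s)
      · linarith
    have hd0 : deriv τ 0 = 0 := by
      have h : τ = fun _ => (-(1/4) : ℝ) := funext hτ14
      rw [h]; simp
    exact hNB 0 ((hEqB' 0).symm.trans hd0)
  · -- non-orthonormal case
    have hτ0 : ∀ s, τ s = 0 := by
      intro s
      rcases mul_eq_zero.mp (hτa s) with h | h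
      · exact h
      · exact absurd (pow_eq_zero_iff two_ne_zero |>.mp h) ha0
    have hdτ0 : ∀ s, deriv τ s = 0 := by
      have h : τ = fun _ => (0 : ℝ) := funext hτ0
      intro s; rw [h]; simp
    have hN3 : ∀ s, (N s).2.2 = dot (T 0) (N 0) * (T s).2.2 := by
      intro s
      have h := hEqB s
      rw [hdτ0 s] at h
      have hb3ne : (B s).2.2 ≠ 0 := fun h0 => hNB s (by rw [h0]; ring)
      have h2 : (B s).2.2 * ((N s).2.2 - dot (T 0) (N 0) * (T s).2.2) = 0 := by
        linear_combination -h
      rcases mul_eq_zero.mp h2 with h3 | h3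
      · exact absurd h3 hb3ne
      · linarith
    have hdb3 : ∀ s, deriv (fun u => (B u).2.2) s = 0 := by
      intro s; rw [hO3 s, hτ0 s, hN3 s]; ring
    have hb3const : ∀ s, (B s).2.2 = (B 0).2.2 :=
      fun s => is_const_of_deriv_eq_zero dB.snd.snd hdb3 s 0
    have hdn3 : ∀ s, deriv (fun u => (N u).2.2) s
        = dot (T 0) (N 0) * (k 0 * (N s).2.2) := by
      intro s
      have h : (fun u => (N u).2.2) = fun u => dot (T 0) (N 0) * (T u).2.2 := funext hN3
      rw [h, deriv_const_mul _ (dT.snd.snd s), hO1 s]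
    have ht3c : ∀ s, (T s).2.2
        = -(B 0).2.2 / (2 * k 0 * (1 + dot (T 0) (N 0) ^ 2)) := by
      intro s
      have h := hdn3 s
      rw [hO2 s, hτ0 s, hN3 s, hb3const s] at h
      have hden : 2 * k 0 * (1 + dot (T 0) (N 0) ^ 2) ≠ 0 := by positivity
      field_simp
      linear_combination (-2) * h
    have hdt3 : ∀ s, deriv (fun u => (T u).2.2) s = 0 := by
      have h : (fun u => (T u).2.2)
          = fun _ => -(B 0).2.2 / (2 * k 0 * (1 + dot (T 0) (N 0) ^ 2)) := funext ht3c
      intro s; rw [h]; simp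
    have hN30 : (N 0).2.2 = 0 := by
      have h := hO1 0
      rw [hdt3 0] at h
      rcases mul_eq_zero.mp h.symm with h | h
      · exact absurd h hc0
      · exact h
    exact hNB 0 (by rw [hN30]; ring)
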